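/- Let C be a component of an acyclic agreement forest F for trees T, and let σ order leaves by components following a topological order of the inheritance graph. For any leaf l_j ∈ L(C) with first leaf l_s of C, the sibling v_j of l_j in T^j lies inside the subtree of T^j spanned by the already-added leaves of C, and the nodes of that subtree are indexed identically across all trees in T. -/

import Mathlib

open scoped Classical

namespace OLA

/-- Rooted binary phylogenetic trees with `ℕ`-labeled leaves. -/
inductive BTree where
  | leaf (x : ℕ)
  | node (l r : BTree)
deriving DecidableEq

namespace BTree

def leafList : BTree → List ℕ
  | .leaf x => [x]
  | .node l r => leafList l ++ leafList r

def leafSet (t : BTree) : Finset ℕ := t.leafList.toFinset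

/-- `t` is a phylogenetic tree on the leaf set `{0, …, n-1}`. -/
def IsPhylo (t : BTree) (n : ℕ) : Prop :=
  t.leafList.Nodup ∧ t.leafSet = Finset.range n

def minLeaf : BTree → ℕ
  | .leaf x => x
  | .node l r => min (minLeaf l) (minLeaf r)

/-- OLA index of the root of a (sub)tree: leaf label, or minus the second
smallest of the minimal leaves of the two children. -/
def idx : BTree → ℤ
  | .leaf x => (x : ℤ)
  | .node l r => -(max (minLeaf l) (minLeaf r) : ℤ)

/-- Restriction `T^i` of `t` to the leaves labeled `≤ i` (suppressing
degree-2 nodes); `none` if no such leaf exists. -/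
def restrictLe : BTree → ℕ → Option BTree
  | .leaf x, i => if x ≤ i then some (.leaf x) else none
  | .node l r, i =>
    match restrictLe l i, restrictLe r i with
    | some l', some r' => some (.node l' r')
    | some l', none => some l'
    | none, some r' => some r'
    | none, none => none

/-- Restriction `T|_S` of `t` to the leaves in `S` (suppressing degree-2 nodes). -/
def restrictTo : BTree → Finset ℕ → Option BTree
  | .leaf x, S => if x ∈ S then some (.leaf x) else none
  | .node l r, S =>
    match restrictTo l S, restrictTo r S with
    | some l', some r' => some (.node l' r')
    | some l', none => some l'
    | none, some r' => some r'
    | none, none => none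

/-- OLA index of the sibling of the leaf labeled `i`, if it exists. -/
def siblingIdx : BTree → ℕ → Option ℤ
  | .leaf _, _ => none
  | .node l r, i =>
    if l = .leaf i then some r.idx
    else if r = .leaf i then some l.idx
    else (siblingIdx l i).orElse (fun _ => siblingIdx r i)

/-- The OLA vector entry of `t` at position `i ≥ 1`: the index of the sibling
of leaf `i` in the restriction of `t` to leaves `0, …, i`. -/
def olaEntry (t : BTree) (i : ℕ) : ℤ :=
  ((t.restrictLe i).bind (fun t' => t'.siblingIdx i)).getD 0

def relabel (f : ℕ → ℕ) : BTree → BTree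
  | .leaf x => .leaf (f x)
  | .node l r => .node (relabel f l) (relabel f r)

/-- The set of clusters (leaf sets of rooted subtrees) of `t`.  Two leaf-labeled
trees over the same leaf set are isomorphic iff their cluster sets coincide. -/
def clusters : BTree → Set (Set ℕ)
  | .leaf x => {{x}}
  | .node l r => insert {y | y ∈ (node l r).leafList} (clusters l ∪ clusters r)

def subtreeAt : BTree → List Bool → Option BTree
  | t, [] => some t
  | .leaf _, _ :: _ => none
  | .node l _, false :: p => subtreeAt l p
  | .node _ r, true :: p => subtreeAt r p

/-- `w` occurs as a rooted subtree (i.e. the subtree below a node) of `t`. -/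
def IsNode (t w : BTree) : Prop := ∃ p, t.subtreeAt p = some w

/-- The position of the least common ancestor of the leaves in `S`. -/
def lcaPos : BTree → Finset ℕ → List Bool
  | .leaf _, _ => []
  | .node l r, S =>
    if S ⊆ l.leafSet then false :: lcaPos l S
    else if S ⊆ r.leafSet then true :: lcaPos r S
    else []

/-- Positions of the nodes of the minimal spanning subtree `T(S)`. -/
def spanNodes (t : BTree) (S : Finset ℕ) : Set (List Bool) :=
  {p | t.lcaPos S <+: p ∧ ∃ u, t.subtreeAt p = some u ∧ ∃ x ∈ S, x ∈ u.leafList}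

end BTree

/-- OLA vector of tree `t` under the leaf ordering `σ` (leaf `x` is the
`σ x`-th leaf in the order). -/
def ola (t : BTree) (σ : Equiv.Perm ℕ) (i : ℕ) : ℤ :=
  (t.relabel σ).olaEntry i

/-- `σ` is a valid leaf ordering of the leaf set `{0, …, n-1}`. -/
def IsOrdering (σ : Equiv.Perm ℕ) (n : ℕ) : Prop := ∀ x < n, σ x < n

/-- The set of (corrected) mismatched indices among `{1, …, i}` of a family of
OLA vectors: an index is mismatched if two of the vectors differ there, or if
all vectors place that leaf above the internal node created by an
already-mismatched leaf. -/
noncomputable def mismatch {ι : Type*} (v : ι → ℕ → ℤ) : ℕ → Finset ℕ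
  | 0 => ∅
  | i + 1 =>
    let M := mismatch v i
    if (∃ a b : ι, v a (i+1) ≠ v b (i+1)) ∨ (∃ j ∈ M, ∀ a : ι, v a (i+1) = -(j : ℤ))
    then insert (i+1) M else M

/-- Corrected OLA distance of a family of OLA vectors of trees on `n` leaves. -/
noncomputable def corrDist {ι : Type*} (v : ι → ℕ → ℤ) (n : ℕ) : ℕ :=
  (mismatch v (n-1)).card

/-- Hamming OLA distance: the number of indices where at least two vectors differ. -/
noncomputable def hamDist {ι : Type*} (v : ι → ℕ → ℤ) (n : ℕ) : ℕ :=
  ((Finset.Icc 1 (n-1)).filter fun i => ∃ a b : ι, v a i ≠ v b i).card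

/-- `comp` is an agreement forest for the trees `ts` over leaf set `{0,…,n-1}`:
components have pairwise disjoint leaf sets partitioning the full leaf set,
each tree restricted to a component's leaves is isomorphic to the component,
and the spanning subtrees are node-disjoint in each tree. -/
def IsAF {ι : Type*} (ts : ι → BTree) (n : ℕ) {f : ℕ} (comp : Fin f → BTree) : Prop :=
  (∀ i, (comp i).leafList.Nodup) ∧
  (∀ i j, i ≠ j → Disjoint (comp i).leafSet (comp j).leafSet) ∧
  (Finset.univ.biUnion (fun i => (comp i).leafSet) = Finset.range n) ∧
  (∀ a i, ∃ c, (ts a).restrictTo (comp i).leafSet = some c ∧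
      c.clusters = (comp i).clusters) ∧
  (∀ a i j, i ≠ j →
      Disjoint (BTree.spanNodes (ts a) ((comp i).leafSet))
               (BTree.spanNodes (ts a) ((comp j).leafSet)))

/-- Edge of the inheritance graph: some tree has a directed path from the root
of the spanning subtree of component `i` down to that of component `j`. -/
def inhEdge {ι : Type*} (ts : ι → BTree) {f : ℕ} (comp : Fin f → BTree)
    (i j : Fin f) : Prop :=
  i ≠ j ∧ ∃ a, (BTree.lcaPos (ts a) ((comp i).leafSet)) <+:
      (BTree.lcaPos (ts a) ((comp j).leafSet))

/-- `comp` is an acyclic agreement forest for `ts`. -/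
def IsAAF {ι : Type*} (ts : ι → BTree) (n : ℕ) {f : ℕ} (comp : Fin f → BTree) : Prop :=
  IsAF ts n comp ∧ ∀ i, ¬ Relation.TransGen (inhEdge ts comp) i i

/-- Size of a maximum acyclic agreement forest (an AAF with fewest components). -/
noncomputable def maafSize {ι : Type*} (ts : ι → BTree) (n : ℕ) : ℕ :=
  sInf {f | ∃ comp : Fin f → BTree, IsAAF ts n comp}

end OLA

/-! Let `U` be the subtree of `T` below the root of `T(C)`. The topological order rules out a
leaf of a later component below that root, and node-disjointness of the spanning subtrees rules
out a leaf of an earlier one, so the leaves of `U` attached no later than `x` are exactly the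
already-added leaves of `C`. Hence in `T^x` the leaf `x` hangs inside the restriction of `U`; its
sibling consists of already-added leaves of `C`, which bounds its OLA index, and it is also the
sibling of `x` in `T` restricted to those leaves. Every tree of the family restricts to the leaves
of `C` as the same tree up to swapping children, so that sibling, and with it the index, is the
same in all trees. -/

namespace OLA
namespace BTree

theorem mem_leafSet {y : ℕ} {t : BTree} : y ∈ t.leafSet ↔ y ∈ t.leafList := List.mem_toFinset

theorem leafList_relabel (f : ℕ → ℕ) : ∀ t : BTree, (t.relabel f).leafList = t.leafList.map f
  | .leaf _ => rfl
  | .node l r => by simp [relabel, leafList, leafList_relabel f l, leafList_relabel f r]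

theorem nodup_relabel {f : ℕ → ℕ} (hf : Function.Injective f) {t : BTree}
    (ht : t.leafList.Nodup) : (t.relabel f).leafList.Nodup :=
  leafList_relabel f t ▸ ht.map hf

theorem minLeaf_mem : ∀ t : BTree, t.minLeaf ∈ t.leafList
  | .leaf _ => List.mem_singleton_self _
  | .node l r => by
      rcases min_choice l.minLeaf r.minLeaf with h | h <;>
        simp [minLeaf, leafList, h, minLeaf_mem l, minLeaf_mem r]

theorem nodup_node {l r : BTree} : (node l r).leafList.Nodup ↔
    l.leafList.Nodup ∧ r.leafList.Nodup ∧ ∀ y ∈ l.leafList, y ∉ r.leafList := by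
  simp only [leafList, List.nodup_append]
  exact and_congr_right' (and_congr_right' ⟨fun h y hl hr => h y hl y hr rfl,
    fun h y hl _ hr hyz => h y hl (hyz ▸ hr)⟩)

theorem natAbs_idx_mem {w : BTree} (hnd : w.leafList.Nodup) :
    w.idx.natAbs ∈ w.leafList ∧ (w.idx = w.idx.natAbs ∨ ∃ y ∈ w.leafList, y < w.idx.natAbs) := by
  rcases w with y | ⟨l, r⟩
  · simp [idx, leafList]
  have hne : l.minLeaf ≠ r.minLeaf := fun h =>
    (nodup_node.1 hnd).2.2 _ (minLeaf_mem l) (h ▸ minLeaf_mem r)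
  simp only [idx, ← Nat.cast_max, Int.natAbs_neg, Int.natAbs_natCast, leafList, List.mem_append]
  refine ⟨?_, Or.inr ?_⟩
  · rcases max_choice l.minLeaf r.minLeaf with h | h <;> simp [h, minLeaf_mem]
  · rcases lt_or_gt_of_ne hne with h | h
    · exact ⟨l.minLeaf, Or.inl (minLeaf_mem l), lt_max_of_lt_right h⟩
    · exact ⟨r.minLeaf, Or.inr (minLeaf_mem r), lt_max_of_lt_left h⟩

section restrictTo

variable {S : Finset ℕ}

theorem leafList_restrictTo (S : Finset ℕ) :
    ∀ t : BTree, ((t.restrictTo S).map leafList).getD [] = t.leafList.filter (· ∈ S)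
  | .leaf x => by by_cases h : x ∈ S <;> simp [restrictTo, leafList, h]
  | .node l r => by
      rw [leafList, List.filter_append, ← leafList_restrictTo S l, ← leafList_restrictTo S r,
        restrictTo]
      rcases l.restrictTo S with _ | l' <;> rcases r.restrictTo S with _ | r' <;> simp [leafList]

theorem leafList_eq_filter_of_restrictTo {t u : BTree} (h : t.restrictTo S = some u) :
    u.leafList = t.leafList.filter (· ∈ S) := by
  simpa [h] using leafList_restrictTo S t

theorem nodup_of_restrictTo {t u : BTree} (ht : t.leafList.Nodup)
    (h : t.restrictTo S = some u) : u.leafList.Nodup :=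
  leafList_eq_filter_of_restrictTo h ▸ ht.filter _

theorem exists_restrictTo_eq_some {t : BTree} {x : ℕ} (hx : x ∈ t.leafList) (hxS : x ∈ S) :
    ∃ u, t.restrictTo S = some u := by
  rcases h : t.restrictTo S with _ | u
  · have hfilter := leafList_restrictTo S t
    rw [h, Option.map_none, Option.getD_none, eq_comm, List.filter_eq_nil_iff] at hfilter
    exact absurd (decide_eq_true hxS) (hfilter x hx)
  · exact ⟨u, rfl⟩

theorem restrictTo_eq_self : ∀ {t : BTree}, (∀ y ∈ t.leafList, y ∈ S) → t.restrictTo S = some t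
  | .leaf _, h => by simpa [restrictTo, leafList] using h
  | .node l r, h => by
      simp only [leafList, List.mem_append] at h
      rw [restrictTo, restrictTo_eq_self fun y hy => h y (.inl hy),
        restrictTo_eq_self fun y hy => h y (.inr hy)]

theorem restrictLe_eq_restrictTo (i : ℕ) :
    ∀ t : BTree, t.restrictLe i = t.restrictTo (Finset.range (i + 1))
  | .leaf x => by simp [restrictLe, restrictTo]
  | .node l r => by
      rw [restrictLe, restrictTo, restrictLe_eq_restrictTo i l, restrictLe_eq_restrictTo i r]

theorem restrictTo_restrictTo (S₁ S₂ : Finset ℕ) :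
    ∀ t : BTree, (t.restrictTo S₁).bind (·.restrictTo S₂) = t.restrictTo (S₁ ∩ S₂)
  | .leaf x => by
      by_cases h₁ : x ∈ S₁ <;> by_cases h₂ : x ∈ S₂ <;> simp [restrictTo, h₁, h₂]
  | .node l r => by
      have ihl := restrictTo_restrictTo S₁ S₂ l
      have ihr := restrictTo_restrictTo S₁ S₂ r
      rw [restrictTo, restrictTo, ← ihl, ← ihr]
      rcases l.restrictTo S₁ with _ | l₁ <;> rcases r.restrictTo S₁ with _ | r₁ <;>
        simp only [Option.bind_none, Option.bind_some, restrictTo]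
      · rcases r₁.restrictTo S₂ <;> rfl
      · rcases l₁.restrictTo S₂ <;> rfl

theorem restrictTo_relabel {f : ℕ → ℕ} (hf : Function.Injective f) (A : Finset ℕ) :
    ∀ t : BTree, (t.relabel f).restrictTo (A.image f) = (t.restrictTo A).map (relabel f)
  | .leaf x => by by_cases h : x ∈ A <;> simp [relabel, restrictTo, hf.mem_finset_image, h]
  | .node l r => by
      rw [relabel, restrictTo, restrictTo, restrictTo_relabel hf A l, restrictTo_relabel hf A r]
      rcases l.restrictTo A <;> rcases r.restrictTo A <;> rfl

end restrictTo

section subtreeAt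

@[simp] theorem subtreeAt_nil (t : BTree) : t.subtreeAt [] = some t := by cases t <;> rfl

theorem leafList_sublist_of_subtreeAt :
    ∀ {t u : BTree} {p : List Bool}, t.subtreeAt p = some u → u.leafList.Sublist t.leafList
  | _, _, [], h => by cases (subtreeAt_nil _).symm.trans h; exact List.Sublist.refl _
  | .leaf _, _, _ :: _, h => by cases h
  | .node l r, _, false :: _, h =>
      (leafList_sublist_of_subtreeAt (t := l) h).trans (List.sublist_append_left _ r.leafList)
  | .node l r, _, true :: _, h =>
      (leafList_sublist_of_subtreeAt (t := r) h).trans (List.sublist_append_right l.leafList _)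

theorem eq_of_subtreeAt_leaf {y : ℕ} {u : BTree} :
    ∀ {p : List Bool}, (leaf y).subtreeAt p = some u → u = leaf y
  | [], h => (Option.some_inj.1 ((subtreeAt_nil _).symm.trans h)).symm
  | _ :: _, h => by cases h

theorem subtreeAt_append (p q : List Bool) (t : BTree) :
    t.subtreeAt (p ++ q) = (t.subtreeAt p).bind (·.subtreeAt q) := by
  induction p generalizing t with
  | nil => simp
  | cons b p ih => rcases t with _ | ⟨l, r⟩ <;> [rfl; (rcases b <;> exact ih _)]

theorem subtreeAt_relabel (f : ℕ → ℕ) :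
    ∀ (t : BTree) (p : List Bool), (t.relabel f).subtreeAt p = (t.subtreeAt p).map (relabel f)
  | _, [] => by simp
  | .leaf _, _ :: _ => rfl
  | .node l _, false :: p => subtreeAt_relabel f l p
  | .node _ r, true :: p => subtreeAt_relabel f r p

theorem prefix_or_prefix_of_subtreeAt {t : BTree} (hnd : t.leafList.Nodup)
    {p p' : List Bool} {u u' : BTree} {x : ℕ} (hp : t.subtreeAt p = some u)
    (hp' : t.subtreeAt p' = some u') (hx : x ∈ u.leafList) (hx' : x ∈ u'.leafList) :
    p <+: p' ∨ p' <+: p := by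
  induction t generalizing p p' with
  | leaf y => rcases p with _ | ⟨b, p⟩ <;> [exact .inl List.nil_prefix; cases hp]
  | node l r ihl ihr =>
      rcases p with _ | ⟨b, p⟩
      · exact .inl List.nil_prefix
      rcases p' with _ | ⟨b', p'⟩
      · exact .inr List.nil_prefix
      obtain ⟨hndl, hndr, hdisj⟩ := nodup_node.1 hnd
      have hmem {c : BTree} {q : List Bool} {v : BTree} (h : c.subtreeAt q = some v)
          (hx : x ∈ v.leafList) : x ∈ c.leafList := (leafList_sublist_of_subtreeAt h).subset hx
      rcases b <;> rcases b' <;> simp only [subtreeAt] at hp hp' <;>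
        simp only [List.cons_prefix_cons, true_and, Bool.false_eq_true, Bool.true_eq_false,
          false_and, or_self]
      · exact ihl hndl hp hp'
      · exact hdisj x (hmem hp hx) (hmem hp' hx')
      · exact hdisj x (hmem hp' hx') (hmem hp hx)
      · exact ihr hndr hp hp'

theorem exists_subtreeAt_lcaPos : ∀ (t : BTree) (S : Finset ℕ), S ⊆ t.leafSet →
    ∃ u, t.subtreeAt (t.lcaPos S) = some u ∧ S ⊆ u.leafSet
  | .leaf x, _, h => ⟨.leaf x, rfl, h⟩
  | .node l r, S, h => by
      rw [lcaPos]
      split_ifs with hl hr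
      exacts [exists_subtreeAt_lcaPos l S hl, exists_subtreeAt_lcaPos r S hr, ⟨_, rfl, h⟩]

theorem exists_subtreeAt_restrictTo {B : Finset ℕ} :
    ∀ {t U u : BTree} {p : List Bool}, t.subtreeAt p = some U → U.restrictTo B = some u →
      ∃ v, t.restrictTo B = some v ∧ ∃ q, v.subtreeAt q = some u
  | _, _, _, [], hp, hU => by
      cases (subtreeAt_nil _).symm.trans hp; exact ⟨_, hU, [], subtreeAt_nil _⟩
  | .leaf _, _, _, _ :: _, hp, _ => by cases hp
  | .node l r, _, _, false :: _, hp, hU => by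
      obtain ⟨v, hv, q, hq⟩ := exists_subtreeAt_restrictTo (t := l) hp hU
      rw [restrictTo, hv]
      rcases r.restrictTo B with _ | vr
      exacts [⟨v, rfl, q, hq⟩, ⟨node v vr, rfl, false :: q, hq⟩]
  | .node l r, _, _, true :: _, hp, hU => by
      obtain ⟨v, hv, q, hq⟩ := exists_subtreeAt_restrictTo (t := r) hp hU
      rw [restrictTo, hv]
      rcases l.restrictTo B with _ | vl
      exacts [⟨v, rfl, q, hq⟩, ⟨node vl v, rfl, true :: q, hq⟩]

end subtreeAt

section sibling

def IsSibling (t : BTree) (x : ℕ) (w : BTree) : Prop :=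
  ∃ p, t.subtreeAt p = some (node (leaf x) w) ∨ t.subtreeAt p = some (node w (leaf x))

variable {t w : BTree} {x : ℕ}

theorem IsSibling.of_subtreeAt {u : BTree} {p : List Bool} (hp : t.subtreeAt p = some u)
    (h : IsSibling u x w) : IsSibling t x w := by
  obtain ⟨q, hq⟩ := h
  exact ⟨p ++ q, by simpa only [subtreeAt_append, hp, Option.bind_some]⟩

theorem IsSibling.node_left {r : BTree} (h : IsSibling t x w) : IsSibling (node t r) x w :=
  h.of_subtreeAt (p := [false]) (by simp [subtreeAt])

theorem IsSibling.node_right {l : BTree} (h : IsSibling t x w) : IsSibling (node l t) x w :=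
  h.of_subtreeAt (p := [true]) (by simp [subtreeAt])

theorem IsSibling.nodup (h : IsSibling t x w) (hnd : t.leafList.Nodup) :
    w.leafList.Nodup ∧ x ∉ w.leafList := by
  obtain ⟨p, hp | hp⟩ := h
  · obtain ⟨-, hw, hdisj⟩ := nodup_node.1 (hnd.sublist (leafList_sublist_of_subtreeAt hp))
    exact ⟨hw, hdisj x (List.mem_singleton_self x)⟩
  · obtain ⟨hw, -, hdisj⟩ := nodup_node.1 (hnd.sublist (leafList_sublist_of_subtreeAt hp))
    exact ⟨hw, fun hx => hdisj x hx (List.mem_singleton_self x)⟩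

theorem IsSibling.subset (h : IsSibling t x w) : w.leafList ⊆ t.leafList := by
  obtain ⟨p, hp | hp⟩ := h
  · exact ((List.sublist_append_right [x] _).trans (leafList_sublist_of_subtreeAt hp)).subset
  · exact ((List.sublist_append_left _ [x]).trans (leafList_sublist_of_subtreeAt hp)).subset

theorem exists_isSibling : ∀ {t : BTree}, x ∈ t.leafList → t ≠ leaf x → ∃ w, IsSibling t x w
  | .leaf _, hx, hne => by simp_all [leafList]
  | .node l r, hx, _ => by
      rcases List.mem_append.1 hx with hx | hx
      · by_cases hl : l = leaf x
        · exact ⟨r, [], .inl (by rw [hl, subtreeAt_nil])⟩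
        · obtain ⟨w, hw⟩ := exists_isSibling hx hl
          exact ⟨w, hw.node_left⟩
      · by_cases hr : r = leaf x
        · exact ⟨l, [], .inr (by rw [hr, subtreeAt_nil])⟩
        · obtain ⟨w, hw⟩ := exists_isSibling hx hr
          exact ⟨w, hw.node_right⟩

theorem siblingIdx_eq_none_of_not_mem : ∀ {t : BTree}, x ∉ t.leafList → t.siblingIdx x = none
  | .leaf _, _ => rfl
  | .node l r, hx => by
      simp only [leafList, List.mem_append, not_or] at hx
      have hl : l ≠ leaf x := by rintro rfl; exact hx.1 (List.mem_singleton_self x)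
      have hr : r ≠ leaf x := by rintro rfl; exact hx.2 (List.mem_singleton_self x)
      simp [siblingIdx, hl, hr, siblingIdx_eq_none_of_not_mem hx.1,
        siblingIdx_eq_none_of_not_mem hx.2]

theorem siblingIdx_node_of_mem_left {l r : BTree} (hnd : (node l r).leafList.Nodup)
    (hx : x ∈ l.leafList) (hl : l ≠ leaf x) : (node l r).siblingIdx x = l.siblingIdx x := by
  have hr : r ≠ leaf x := by
    rintro rfl; exact (nodup_node.1 hnd).2.2 x hx (List.mem_singleton_self x)
  rw [siblingIdx, if_neg hl, if_neg hr]
  rcases l.siblingIdx x <;>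
    simp [siblingIdx_eq_none_of_not_mem ((nodup_node.1 hnd).2.2 x hx)]

theorem siblingIdx_node_of_mem_right {l r : BTree} (hnd : (node l r).leafList.Nodup)
    (hx : x ∈ r.leafList) (hr : r ≠ leaf x) : (node l r).siblingIdx x = r.siblingIdx x := by
  have hxl : x ∉ l.leafList := fun h => (nodup_node.1 hnd).2.2 x h hx
  have hl : l ≠ leaf x := by rintro rfl; exact hxl (List.mem_singleton_self x)
  rw [siblingIdx, if_neg hl, if_neg hr, siblingIdx_eq_none_of_not_mem hxl]
  rfl

theorem IsSibling.siblingIdx_eq (h : IsSibling t x w) (hnd : t.leafList.Nodup) :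
    t.siblingIdx x = some w.idx := by
  obtain ⟨p, hp⟩ := h
  induction p generalizing t with
  | nil =>
      rcases hp with hp | hp <;> cases (subtreeAt_nil _).symm.trans hp
      · simp [siblingIdx]
      · have hw : w ≠ leaf x := by
          rintro rfl; exact (nodup_node.1 hnd).2.2 x (by simp [leafList]) (by simp [leafList])
        simp [siblingIdx, hw]
  | cons b p ih =>
      rcases t with _ | ⟨l, r⟩
      · rcases hp with hp | hp <;> cases hp
      obtain ⟨hndl, hndr, -⟩ := nodup_node.1 hnd
      have hx {c : BTree} (hc : c.subtreeAt p = some (node (leaf x) w) ∨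
          c.subtreeAt p = some (node w (leaf x))) : x ∈ c.leafList ∧ c ≠ leaf x := by
        refine ⟨?_, ?_⟩
        · rcases hc with hc | hc <;>
            exact (leafList_sublist_of_subtreeAt hc).subset (by simp [leafList])
        · rintro rfl; rcases hc with hc | hc <;> cases eq_of_subtreeAt_leaf hc
      rcases b
      · rw [siblingIdx_node_of_mem_left hnd (hx hp).1 (hx hp).2, ih hndl hp]
      · rw [siblingIdx_node_of_mem_right hnd (hx hp).1 (hx hp).2, ih hndr hp]

end sibling

inductive SwapEquiv : BTree → BTree → Prop
  | leaf (x : ℕ) : SwapEquiv (leaf x) (leaf x)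
  | node {l r l' r' : BTree} : SwapEquiv l l' → SwapEquiv r r' → SwapEquiv (node l r) (node l' r')
  | swap {l r l' r' : BTree} : SwapEquiv l r' → SwapEquiv r l' → SwapEquiv (node l r) (node l' r')

namespace SwapEquiv

variable {t₁ t₂ : BTree}

theorem eq_leaf {x : ℕ} (h : SwapEquiv (BTree.leaf x) t₂) : t₂ = BTree.leaf x := by
  cases h; rfl

theorem minLeaf_eq (h : SwapEquiv t₁ t₂) : t₁.minLeaf = t₂.minLeaf := by
  induction h with
  | leaf x => rfl
  | node _ _ ih₁ ih₂ => rw [BTree.minLeaf, BTree.minLeaf, ih₁, ih₂]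
  | swap _ _ ih₁ ih₂ => rw [BTree.minLeaf, BTree.minLeaf, ih₁, ih₂, min_comm]

theorem idx_eq (h : SwapEquiv t₁ t₂) : t₁.idx = t₂.idx := by
  cases h with
  | leaf x => rfl
  | node h₁ h₂ => rw [BTree.idx, BTree.idx, h₁.minLeaf_eq, h₂.minLeaf_eq]
  | swap h₁ h₂ => rw [BTree.idx, BTree.idx, h₁.minLeaf_eq, h₂.minLeaf_eq, max_comm]

theorem relabel (f : ℕ → ℕ) (h : SwapEquiv t₁ t₂) : SwapEquiv (t₁.relabel f) (t₂.relabel f) := by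
  induction h with
  | leaf x => exact .leaf (f x)
  | node _ _ ih₁ ih₂ => exact .node ih₁ ih₂
  | swap _ _ ih₁ ih₂ => exact .swap ih₁ ih₂

theorem restrictTo (S : Finset ℕ) (h : SwapEquiv t₁ t₂) :
    Option.Rel SwapEquiv (t₁.restrictTo S) (t₂.restrictTo S) := by
  induction h with
  | leaf x => by_cases hx : x ∈ S <;> simp [BTree.restrictTo, hx, SwapEquiv.leaf]
  | @node l r l' r' _ _ ih₁ ih₂ =>
      rw [BTree.restrictTo, BTree.restrictTo]
      generalize l.restrictTo S = o₁, l'.restrictTo S = o₁', r.restrictTo S = o₂,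
        r'.restrictTo S = o₂' at ih₁ ih₂
      rcases ih₁ <;> rcases ih₂ <;> simp [SwapEquiv.node, *]
  | @swap l r l' r' _ _ ih₁ ih₂ =>
      rw [BTree.restrictTo, BTree.restrictTo]
      generalize l.restrictTo S = o₁, l'.restrictTo S = o₁', r.restrictTo S = o₂,
        r'.restrictTo S = o₂' at ih₁ ih₂
      rcases ih₁ <;> rcases ih₂ <;> simp [SwapEquiv.swap, *]

theorem isSibling (h : SwapEquiv t₁ t₂) {x : ℕ} {w : BTree} (hs : IsSibling t₁ x w) :
    ∃ w', IsSibling t₂ x w' ∧ SwapEquiv w w' := by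
  induction h with
  | leaf y => obtain ⟨p, hp | hp⟩ := hs <;> cases eq_of_subtreeAt_leaf hp
  | node h₁ h₂ ih₁ ih₂ =>
      obtain ⟨_ | ⟨_ | _, p⟩, hp⟩ := hs
      · rcases hp with hp | hp <;> obtain ⟨rfl, rfl⟩ := node.inj (Option.some_inj.1 hp)
        · exact ⟨_, ⟨[], .inl (by rw [h₁.eq_leaf, subtreeAt_nil])⟩, h₂⟩
        · exact ⟨_, ⟨[], .inr (by rw [h₂.eq_leaf, subtreeAt_nil])⟩, h₁⟩
      · obtain ⟨w', hw', hm⟩ := ih₁ ⟨p, hp⟩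
        exact ⟨w', hw'.node_left, hm⟩
      · obtain ⟨w', hw', hm⟩ := ih₂ ⟨p, hp⟩
        exact ⟨w', hw'.node_right, hm⟩
  | swap h₁ h₂ ih₁ ih₂ =>
      obtain ⟨_ | ⟨_ | _, p⟩, hp⟩ := hs
      · rcases hp with hp | hp <;> obtain ⟨rfl, rfl⟩ := node.inj (Option.some_inj.1 hp)
        · exact ⟨_, ⟨[], .inr (by rw [h₁.eq_leaf, subtreeAt_nil])⟩, h₂⟩
        · exact ⟨_, ⟨[], .inl (by rw [h₂.eq_leaf, subtreeAt_nil])⟩, h₁⟩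
      · obtain ⟨w', hw', hm⟩ := ih₁ ⟨p, hp⟩
        exact ⟨w', hw'.node_right, hm⟩
      · obtain ⟨w', hw', hm⟩ := ih₂ ⟨p, hp⟩
        exact ⟨w', hw'.node_left, hm⟩

theorem idx_eq_of_isSibling (h : SwapEquiv t₁ t₂) (hnd : t₂.leafList.Nodup) {x : ℕ} {w₁ w₂ : BTree}
    (h₁ : IsSibling t₁ x w₁) (h₂ : IsSibling t₂ x w₂) : w₁.idx = w₂.idx := by
  obtain ⟨w', hw', hm⟩ := h.isSibling h₁
  rw [hm.idx_eq, ← Option.some_inj, ← hw'.siblingIdx_eq hnd, h₂.siblingIdx_eq hnd]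

end SwapEquiv

section clusters

/-- The leaf set of `t` in the form used by `clusters`. -/
def cluster (t : BTree) : Set ℕ := {y | y ∈ t.leafList}

variable {l r l' r' : BTree}

theorem cluster_node : (node l r).cluster = l.cluster ∪ r.cluster :=
  Set.ext fun _ => List.mem_append

theorem cluster_subset_node_left : l.cluster ⊆ (node l r).cluster :=
  fun _ => List.mem_append_left _

theorem cluster_subset_node_right : r.cluster ⊆ (node l r).cluster :=
  fun _ => List.mem_append_right _

theorem cluster_nonempty (t : BTree) : t.cluster.Nonempty := ⟨t.minLeaf, t.minLeaf_mem⟩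

theorem clusters_node :
    (node l r).clusters = insert (node l r).cluster (l.clusters ∪ r.clusters) := rfl

theorem cluster_mem_clusters : ∀ t : BTree, t.cluster ∈ t.clusters
  | .leaf _ => Set.ext fun _ => List.mem_singleton
  | .node _ _ => Set.mem_insert _ _

theorem subset_cluster_of_mem_clusters : ∀ {t : BTree} {c : Set ℕ}, c ∈ t.clusters →
    c.Nonempty ∧ c ⊆ t.cluster
  | .leaf x, _, rfl => ⟨⟨x, rfl⟩, fun _ hy => List.mem_singleton.2 hy⟩
  | .node l r, c, h => by
      rcases h with rfl | h | h
      · exact ⟨cluster_nonempty _, subset_rfl⟩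
      · exact (subset_cluster_of_mem_clusters h).imp_right (·.trans cluster_subset_node_left)
      · exact (subset_cluster_of_mem_clusters h).imp_right (·.trans cluster_subset_node_right)

theorem cluster_eq_of_clusters_eq {t₁ t₂ : BTree} (h : t₁.clusters = t₂.clusters) :
    t₁.cluster = t₂.cluster :=
  (subset_cluster_of_mem_clusters (h ▸ cluster_mem_clusters t₁)).2.antisymm
    (subset_cluster_of_mem_clusters (h ▸ cluster_mem_clusters t₂)).2

theorem disjoint_cluster (hnd : (node l r).leafList.Nodup) : Disjoint l.cluster r.cluster :=
  Set.disjoint_left.2 (nodup_node.1 hnd).2.2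

theorem nodup_node_comm (hnd : (node l r).leafList.Nodup) : (node r l).leafList.Nodup := by
  obtain ⟨hl, hr, hdisj⟩ := nodup_node.1 hnd
  exact nodup_node.2 ⟨hr, hl, fun y hy hy' => hdisj y hy' hy⟩

theorem clusters_node_comm : (node l r).clusters = (node r l).clusters := by
  rw [clusters_node, clusters_node, cluster_node, cluster_node, Set.union_comm,
    Set.union_comm r.clusters]

theorem cluster_left_ne (hnd : (node l r).leafList.Nodup) : l.cluster ≠ (node l r).cluster := by
  intro h
  obtain ⟨y, hy⟩ := r.cluster_nonempty
  exact Set.disjoint_left.1 (disjoint_cluster hnd) (h ▸ cluster_subset_node_right hy) hy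

theorem cluster_node_ne_singleton (hnd : (node l r).leafList.Nodup) (y : ℕ) :
    (node l r).cluster ≠ {y} := by
  intro h
  obtain ⟨a, ha⟩ := l.cluster_nonempty
  obtain ⟨b, hb⟩ := r.cluster_nonempty
  have ha' : a ∈ ({y} : Set ℕ) := h ▸ cluster_subset_node_left ha
  have hb' : b ∈ ({y} : Set ℕ) := h ▸ cluster_subset_node_right hb
  exact Set.disjoint_left.1 (disjoint_cluster hnd) ha (ha'.trans hb'.symm ▸ hb)

theorem subset_or_subset_of_mem_clusters_node {c : Set ℕ} (hc : c ∈ (node l r).clusters)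
    (hne : c ≠ (node l r).cluster) : c ⊆ l.cluster ∨ c ⊆ r.cluster := by
  rcases hc with rfl | hc | hc
  exacts [absurd rfl hne, .inl (subset_cluster_of_mem_clusters hc).2,
    .inr (subset_cluster_of_mem_clusters hc).2]

theorem clusters_left_eq (hnd : (node l r).leafList.Nodup) :
    l.clusters = {c ∈ (node l r).clusters | c ⊆ l.cluster} := by
  ext c
  refine ⟨fun hc => ⟨.inr (.inl hc), (subset_cluster_of_mem_clusters hc).2⟩, ?_⟩
  rintro ⟨rfl | hc | hc, hcl⟩
  · exact absurd (hcl.antisymm cluster_subset_node_left) (cluster_left_ne hnd).symm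
  · exact hc
  · obtain ⟨⟨y, hy⟩, hcr⟩ := subset_cluster_of_mem_clusters hc
    exact absurd (hcr hy) (Set.disjoint_left.1 (disjoint_cluster hnd) (hcl hy))

theorem clusters_right_eq (hnd : (node l r).leafList.Nodup) :
    r.clusters = {c ∈ (node l r).clusters | c ⊆ r.cluster} := by
  rw [clusters_node_comm]; exact clusters_left_eq (nodup_node_comm hnd)

theorem clusters_children_eq (hnd : (node l r).leafList.Nodup)
    (hnd' : (node l' r').leafList.Nodup) (hcl : (node l r).clusters = (node l' r').clusters)
    (hsub : l'.cluster ⊆ l.cluster) : l.clusters = l'.clusters ∧ r.clusters = r'.clusters := by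
  have hroot := cluster_eq_of_clusters_eq hcl
  have hl : l.cluster = l'.cluster := by
    have hmem : l.cluster ∈ (node l' r').clusters := hcl ▸ .inr (.inl (cluster_mem_clusters l))
    refine ((subset_or_subset_of_mem_clusters_node hmem (hroot ▸ cluster_left_ne hnd)).resolve_right
      ?_).antisymm hsub
    intro h
    obtain ⟨y, hy⟩ := l'.cluster_nonempty
    exact Set.disjoint_left.1 (disjoint_cluster hnd') hy (h (hsub hy))
  have hr : r.cluster = r'.cluster := by
    rw [← Set.union_sdiff_cancel_left (disjoint_cluster hnd).le_bot,
      ← Set.union_sdiff_cancel_left (disjoint_cluster hnd').le_bot, ← cluster_node, ← cluster_node,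
      hroot, hl]
  rw [clusters_left_eq hnd, clusters_left_eq hnd', clusters_right_eq hnd,
    clusters_right_eq hnd', hcl, hl, hr]
  exact ⟨rfl, rfl⟩

theorem swapEquiv_of_clusters_eq : ∀ {t₁ t₂ : BTree}, t₁.leafList.Nodup → t₂.leafList.Nodup →
    t₁.clusters = t₂.clusters → SwapEquiv t₁ t₂
  | .leaf x, .leaf y, _, _, hcl => by
      obtain rfl : x = y := by simpa [clusters] using hcl
      exact .leaf x
  | .leaf x, .node l r, _, hnd, hcl =>
      absurd (cluster_eq_of_clusters_eq hcl).symm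
        (cluster_node_ne_singleton hnd x ∘ (·.trans (Set.ext fun _ => List.mem_singleton)))
  | .node l r, .leaf y, hnd, _, hcl =>
      absurd (cluster_eq_of_clusters_eq hcl)
        (cluster_node_ne_singleton hnd y ∘ (·.trans (Set.ext fun _ => List.mem_singleton)))
  | .node l r, .node l' r', hnd, hnd', hcl => by
      obtain ⟨hndl, hndr, -⟩ := nodup_node.1 hnd
      obtain ⟨hndl', hndr', -⟩ := nodup_node.1 hnd'
      have hmem : l'.cluster ∈ (node l r).clusters := hcl ▸ .inr (.inl (cluster_mem_clusters l'))
      have hne : l'.cluster ≠ (node l r).cluster :=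
        cluster_eq_of_clusters_eq hcl ▸ cluster_left_ne hnd'
      rcases subset_or_subset_of_mem_clusters_node hmem hne with h | h
      · obtain ⟨hl, hr⟩ := clusters_children_eq hnd hnd' hcl h
        exact .node (swapEquiv_of_clusters_eq hndl hndl' hl)
          (swapEquiv_of_clusters_eq hndr hndr' hr)
      · obtain ⟨hr, hl⟩ := clusters_children_eq (nodup_node_comm hnd) hnd'
          (clusters_node_comm.symm.trans hcl) h
        exact .swap (swapEquiv_of_clusters_eq hndl hndr' hl)
          (swapEquiv_of_clusters_eq hndr hndl' hr)

end clusters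

theorem olaEntry_eq_idx_of_isSibling {t v w : BTree} {k : ℕ} (hnd : t.leafList.Nodup)
    (hv : t.restrictTo (Finset.range (k + 1)) = some v) (hw : IsSibling v k w) :
    t.olaEntry k = w.idx := by
  rw [olaEntry, restrictLe_eq_restrictTo, hv, Option.bind_some,
    hw.siblingIdx_eq (nodup_of_restrictTo hnd hv), Option.getD_some]

/-- The sibling of `k` in `t^k` is found inside the restriction of `U` to `[0, k]`, which is
also the restriction of `U` to `B`. -/
theorem exists_isSibling_of_subtreeAt {t U : BTree} {p : List Bool} {B : Finset ℕ} {k k₀ : ℕ}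
    (hnd : t.leafList.Nodup) (hU : t.subtreeAt p = some U) (hk : k ∈ U.leafList)
    (hk₀ : k₀ ∈ U.leafList) (hlt : k₀ < k) (hUB : ∀ y ∈ U.leafList, y ≤ k → y ∈ B)
    (hBk : ∀ y ∈ B, y ≤ k) :
    ∃ v w, t.restrictTo B = some v ∧ IsSibling v k w ∧ t.olaEntry k = w.idx := by
  obtain ⟨u, hu⟩ := exists_restrictTo_eq_some hk (Finset.self_mem_range_succ k)
  have hmem_u {y : ℕ} (hy : y ∈ U.leafList) (hyk : y ≤ k) : y ∈ u.leafList := by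
    rw [leafList_eq_filter_of_restrictTo hu, List.mem_filter]
    exact ⟨hy, decide_eq_true (Finset.mem_range_succ_iff.2 hyk)⟩
  obtain ⟨w, hw⟩ := exists_isSibling (hmem_u hk le_rfl) fun h => by
    have hk₀u := hmem_u hk₀ hlt.le
    rw [h] at hk₀u
    exact hlt.ne (List.mem_singleton.1 hk₀u)
  have huB : U.restrictTo B = some u := by
    have hu_sub : ∀ y ∈ u.leafList, y ∈ B := fun y hy => by
      rw [leafList_eq_filter_of_restrictTo hu, List.mem_filter] at hy
      exact hUB y hy.1 (Finset.mem_range_succ_iff.1 (of_decide_eq_true hy.2))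
    rw [← Finset.inter_eq_right.2 fun y hy => Finset.mem_range_succ_iff.2 (hBk y hy),
      ← restrictTo_restrictTo, hu, Option.bind_some, restrictTo_eq_self hu_sub]
  have hsib {A : Finset ℕ} (hA : U.restrictTo A = some u) :
      ∃ v, t.restrictTo A = some v ∧ IsSibling v k w := by
    obtain ⟨v, hv, q, hq⟩ := exists_subtreeAt_restrictTo hU hA
    exact ⟨v, hv, hw.of_subtreeAt hq⟩
  obtain ⟨vR, hvR, hwR⟩ := hsib hu
  obtain ⟨v, hv, hwv⟩ := hsib huB
  exact ⟨v, w, hv, hwv, olaEntry_eq_idx_of_isSibling hnd hvR hwR⟩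

theorem IsSibling.idx_mem_span {v w : BTree} {k s : ℕ} {A : Finset ℕ} (hw : IsSibling v k w)
    (hnd : v.leafList.Nodup) (hv : ∀ y ∈ v.leafList, y ∈ A ∧ s ≤ y ∧ y ≤ k) :
    w.idx = s ∨ (w.idx.natAbs ∈ A ∧ s < w.idx.natAbs ∧ w.idx.natAbs < k) := by
  obtain ⟨hndw, hkw⟩ := hw.nodup hnd
  obtain ⟨hmem, hcase⟩ := natAbs_idx_mem hndw
  obtain ⟨hA, hs, hk⟩ := hv _ (hw.subset hmem)
  have hlt : w.idx.natAbs < k := hk.lt_of_ne fun h => hkw (h ▸ hmem)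
  rcases hcase with h | ⟨y, hy, hy_lt⟩
  · rcases hs.eq_or_lt with h' | h'
    · exact .inl (h.trans (congrArg _ h'.symm))
    · exact .inr ⟨hA, h', hlt⟩
  · exact .inr ⟨hA, (hv y (hw.subset hy)).2.1.trans_lt hy_lt, hlt⟩

end BTree

open BTree

section forest

variable {ι : Type} {ts : ι → BTree} {n f : ℕ} {comp : Fin f → BTree}

theorem IsAF.leafSet_subset (hF : IsAF ts n comp) (j : Fin f) :
    (comp j).leafSet ⊆ Finset.range n :=
  hF.2.2.1 ▸ Finset.subset_biUnion_of_mem (fun j => (comp j).leafSet) (Finset.mem_univ j)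

theorem IsAF.exists_mem_leafSet (hF : IsAF ts n comp) {y : ℕ} (hy : y ∈ Finset.range n) :
    ∃ j, y ∈ (comp j).leafSet := by
  rw [← hF.2.2.1] at hy
  simpa using hy

/-- Otherwise the root of `T(C_i)` would be a node of `T(C_j)` as well, or `i → j` would be an
edge of the inheritance graph. -/
theorem IsAF.le_of_mem_subtreeAt_lcaPos (hF : IsAF ts n comp) {a : ι} (ht : (ts a).IsPhylo n)
    (htopo : ∀ i j : Fin f, inhEdge ts comp i j → i < j) {i j : Fin f} {U : BTree}
    (hU : (ts a).subtreeAt ((ts a).lcaPos (comp i).leafSet) = some U) {y : ℕ}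
    (hyU : y ∈ U.leafList) (hyj : y ∈ (comp j).leafSet) : i ≤ j := by
  by_contra! hji
  have hsub (k : Fin f) : (comp k).leafSet ⊆ (ts a).leafSet := ht.2 ▸ hF.leafSet_subset k
  obtain ⟨U', hU', hjU'⟩ := exists_subtreeAt_lcaPos _ _ (hsub j)
  rcases prefix_or_prefix_of_subtreeAt ht.1 hU hU' hyU (mem_leafSet.1 (hjU' hyj)) with h | h
  · exact (htopo i j ⟨hji.ne', a, h⟩).not_gt hji
  · obtain ⟨U₀, hU₀, hiU₀⟩ := exists_subtreeAt_lcaPos _ _ (hsub i)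
    obtain rfl : U₀ = U := Option.some_inj.1 (hU₀.symm.trans hU)
    have hz : (comp i).minLeaf ∈ (comp i).leafSet := mem_leafSet.2 (minLeaf_mem _)
    exact Set.disjoint_left.1 (hF.2.2.2.2 a i j hji.ne')
      ⟨List.prefix_refl _, U₀, hU, _, hz, mem_leafSet.1 (hiU₀ hz)⟩ ⟨h, U₀, hU, y, hyj, hyU⟩

theorem IsAF.rel_swapEquiv_restrictTo_relabel (hF : IsAF ts n comp) (hts : ∀ a, (ts a).IsPhylo n)
    {g : ℕ → ℕ} (hg : Function.Injective g) {i : Fin f} {S : Finset ℕ}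
    (hS : S ⊆ (comp i).leafSet) (a b : ι) :
    Option.Rel SwapEquiv (((ts a).relabel g).restrictTo (S.image g))
      (((ts b).relabel g).restrictTo (S.image g)) := by
  have hrestrict (c : ι) : (ts c).restrictTo S =
      ((ts c).restrictTo (comp i).leafSet).bind (·.restrictTo S) := by
    rw [restrictTo_restrictTo, Finset.inter_eq_right.2 hS]
  obtain ⟨ca, hca, hcla⟩ := hF.2.2.2.1 a i
  obtain ⟨cb, hcb, hclb⟩ := hF.2.2.2.1 b i
  have hm : SwapEquiv ca cb := swapEquiv_of_clusters_eq (nodup_of_restrictTo (hts a).1 hca)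
    (nodup_of_restrictTo (hts b).1 hcb) (hcla.trans hclb.symm)
  rw [restrictTo_relabel hg, restrictTo_relabel hg, hrestrict, hrestrict, hca, hcb,
    Option.bind_some, Option.bind_some]
  have hrel := hm.restrictTo S
  generalize ca.restrictTo S = o₁, cb.restrictTo S = o₂ at hrel
  rcases hrel with ⟨h⟩ | _
  exacts [.some (h.relabel g), .none]

theorem exists_isSibling_restrictTo_component (hts : ∀ a, (ts a).IsPhylo n)
    (hF : IsAF ts n comp) {σ : Equiv.Perm ℕ}
    (horder : ∀ i j : Fin f, i < j →
      ∀ x ∈ (comp i).leafSet, ∀ y ∈ (comp j).leafSet, σ x < σ y)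
    (htopo : ∀ i j : Fin f, inhEdge ts comp i j → i < j) {i : Fin f} {x x₀ : ℕ}
    (hx : x ∈ (comp i).leafSet) (hx₀ : x₀ ∈ (comp i).leafSet) (hlt : σ x₀ < σ x) (a : ι) :
    ∃ v w, ((ts a).relabel σ).restrictTo (((comp i).leafSet.filter (σ · ≤ σ x)).image σ) = some v ∧
      IsSibling v (σ x) w ∧ ola (ts a) σ (σ x) = w.idx := by
  obtain ⟨U, hU, hSU⟩ := exists_subtreeAt_lcaPos (ts a) _ ((hts a).2 ▸ hF.leafSet_subset i)
  have hmem {y : ℕ} (hy : y ∈ (comp i).leafSet) : σ y ∈ (U.relabel σ).leafList := by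
    rw [leafList_relabel]
    exact List.mem_map_of_mem (mem_leafSet.1 (hSU hy))
  refine exists_isSibling_of_subtreeAt (nodup_relabel σ.injective (hts a).1)
    (by rw [subtreeAt_relabel, hU, Option.map_some]) (hmem hx) (hmem hx₀) hlt ?_ ?_
  · intro y hy hyx
    rw [leafList_relabel] at hy
    obtain ⟨z, hzU, rfl⟩ := List.mem_map.1 hy
    obtain ⟨j, hzj⟩ := hF.exists_mem_leafSet
      ((hts a).2 ▸ mem_leafSet.2 ((leafList_sublist_of_subtreeAt hU).subset hzU))
    rcases (hF.le_of_mem_subtreeAt_lcaPos (hts a) htopo hU hzU hzj).lt_or_eq with hij | rfl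
    · exact absurd (horder i j hij x hx z hzj) hyx.not_gt
    · exact Finset.mem_image_of_mem σ (Finset.mem_filter.2 ⟨hzj, hyx⟩)
  · intro y hy
    obtain ⟨z, hz, rfl⟩ := Finset.mem_image.1 hy
    exact (Finset.mem_filter.1 hz).2

end forest

end OLA

open OLA in
theorem stmt8_general {ι : Type} (n f : ℕ)
    (ts : ι → BTree) (hts : ∀ a, (ts a).IsPhylo n)
    (comp : Fin f → BTree) (hF : IsAAF ts n comp)
    (σ : Equiv.Perm ℕ)
    (horder : ∀ i j : Fin f, i < j →
      ∀ x ∈ (comp i).leafSet, ∀ y ∈ (comp j).leafSet, σ x < σ y)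
    (htopo : ∀ i j : Fin f, inhEdge ts comp i j → i < j)
    (i : Fin f) (s : ℕ)
    (hs : s ∈ (comp i).leafSet.image σ ∧ ∀ y ∈ (comp i).leafSet, s ≤ σ y)
    (x : ℕ) (hx : x ∈ (comp i).leafSet) (hxs : σ x ≠ s) :
    (∀ a b : ι, ola (ts a) σ (σ x) = ola (ts b) σ (σ x)) ∧
    (∀ a : ι, ola (ts a) σ (σ x) ∈
      {z : ℤ | z = (s : ℤ) ∨
        (z.natAbs ∈ (comp i).leafSet.image σ ∧ s < z.natAbs ∧ z.natAbs < σ x)}) := by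
  obtain ⟨hs_mem, hs_min⟩ := hs
  obtain ⟨x₀, hx₀, rfl⟩ := Finset.mem_image.1 hs_mem
  have hsib := exists_isSibling_restrictTo_component hts hF.1 horder htopo hx hx₀
    ((hs_min x hx).lt_of_ne' hxs)
  have hnd (a : ι) := BTree.nodup_relabel σ.injective (hts a).1
  refine ⟨fun a b => ?_, fun a => ?_⟩
  · obtain ⟨va, wa, hva, hwa, hola_a⟩ := hsib a
    obtain ⟨vb, wb, hvb, hwb, hola_b⟩ := hsib b
    have hm := hF.1.rel_swapEquiv_restrictTo_relabel hts σ.injective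
      (Finset.filter_subset (σ · ≤ σ x) (comp i).leafSet) a b
    rw [hva, hvb, Option.rel_some_some] at hm
    rw [hola_a, hola_b, hm.idx_eq_of_isSibling (BTree.nodup_of_restrictTo (hnd b) hvb) hwa hwb]
  · obtain ⟨v, w, hv, hw, hola⟩ := hsib a
    rw [hola]
    refine hw.idx_mem_span (BTree.nodup_of_restrictTo (hnd a) hv) fun y hy => ?_
    rw [BTree.leafList_eq_filter_of_restrictTo hv, List.mem_filter, decide_eq_true_iff] at hy
    obtain ⟨z, hz, rfl⟩ := Finset.mem_image.1 hy.2
    obtain ⟨hzS, hzx⟩ := Finset.mem_filter.1 hz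
    exact ⟨Finset.mem_image_of_mem σ hzS, hs_min z hzS, hzx⟩

open OLA in
/-- Lemma 1: with leaves ordered component-by-component along a
topological order of the inheritance graph, for any non-first leaf `x` of a
component (with first leaf at position `s`), the sibling of `x` at attachment
time lies in the subtree spanned by the already-added leaves of the component:
its OLA index belongs to the index span of those leaves, and it is indexed
identically across all trees. -/
theorem stmt8 {ι : Type} [Fintype ι] [Nonempty ι] (n f : ℕ)
    (ts : ι → BTree) (hts : ∀ a, (ts a).IsPhylo n)
    (comp : Fin f → BTree) (hF : IsAAF ts n comp)
    (σ : Equiv.Perm ℕ) (hσ : IsOrdering σ n)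
    (horder : ∀ i j : Fin f, i < j →
      ∀ x ∈ (comp i).leafSet, ∀ y ∈ (comp j).leafSet, σ x < σ y)
    (htopo : ∀ i j : Fin f, inhEdge ts comp i j → i < j)
    (i : Fin f) (s : ℕ)
    (hs : s ∈ (comp i).leafSet.image σ ∧ ∀ y ∈ (comp i).leafSet, s ≤ σ y)
    (x : ℕ) (hx : x ∈ (comp i).leafSet) (hxs : σ x ≠ s) :
    (∀ a b : ι, ola (ts a) σ (σ x) = ola (ts b) σ (σ x)) ∧
    (∀ a : ι, ola (ts a) σ (σ x) ∈
      {z : ℤ | z = (s : ℤ) ∨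
        (z.natAbs ∈ (comp i).leafSet.image σ ∧ s < z.natAbs ∧ z.natAbs < σ x)}) :=
  stmt8_general n f ts hts comp hF σ horder htopo i s hs x hx hxs
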